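/- arXiv:1303.3697 — 4 statements merged into one kernel-verified Lean document; each statement's English description precedes it below -/
import Mathlib

section
/- Let I ⊆ ℝ be an open invex set with respect to η : I × I → ℝ₊, and let f : I → ℝ be absolutely continuous with a, b ∈ I and η(b,a) ≠ 0, such that t ↦ f'(a + t·η(b,a)) is integrable on [0,1]. Then (1/6)[f(a) + 4f(a + η(b,a)/2) + f(a + η(b,a))] − (1/η(b,a)) ∫_a^{a+η(b,a)} f(x) dx = η(b,a) ∫_0^1 m(t) f'(a + t·η(b,a)) dt, where m(t) = t − 1/6 for t ∈ [0, 1/2) and m(t) = t − 5/6 for t ∈ [1/2, 1]. -/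
/-!
Put `c = η b a` and rescale to `[0, 1]`: `G t = f a + c ∫₀ᵗ f' (a + s c)` is absolutely continuous,
agrees with `t ↦ f (a + t c)` on `[0, 1]`, and has derivative `c f' (a + t c)` almost everywhere.
Integrating by parts against `t - 1/6` on `[0, 1/2]` and against `t - 5/6` on `[1/2, 1]`, the
boundary terms add up to `(G 0 + 4 G (1/2) + G 1) / 6` and the remaining integrals to
`∫₀¹ G = (1/c) ∫ₐ^{a+c} f`.
-/

open MeasureTheory intervalIntegral Set

noncomputable def simpsonKernel (t : ℝ) : ℝ := if t < 1/2 then t - 1/6 else t - 5/6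

theorem AbsolutelyContinuousOnInterval.integral_sub_const_mul_deriv {h : ℝ → ℝ} {u v : ℝ}
    (hh : AbsolutelyContinuousOnInterval h u v) (k : ℝ) :
    ∫ t in u..v, (t - k) * deriv h t = (v - k) * h v - (u - k) * h u - ∫ t in u..v, h t := by
  have hlin : AbsolutelyContinuousOnInterval (fun t => t - k) u v :=
    (contDiffOn_id.sub contDiffOn_const).absolutelyContinuousOnInterval
  simp [hlin.integral_mul_deriv_eq_deriv_mul hh]

theorem AbsolutelyContinuousOnInterval.integral_simpsonKernel_mul_deriv {h : ℝ → ℝ}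
    (hh : AbsolutelyContinuousOnInterval h 0 1) :
    ∫ t in (0:ℝ)..1, simpsonKernel t * deriv h t =
      (h 0 + 4 * h (1/2) + h 1) / 6 - ∫ t in (0:ℝ)..1, h t := by
  have hleft : EqOn (fun t => simpsonKernel t * deriv h t) (fun t => (t - 1/6) * deriv h t)
      (uIoo 0 (1/2)) := by
    intro t ht
    rw [uIoo_of_le (by norm_num)] at ht
    simp only [simpsonKernel, if_pos ht.2]
  have hright : EqOn (fun t => simpsonKernel t * deriv h t) (fun t => (t - 5/6) * deriv h t)
      (uIoo (1/2) 1) := by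
    intro t ht
    rw [uIoo_of_le (by norm_num)] at ht
    simp only [simpsonKernel, if_neg (not_lt.2 ht.1.le)]
  have hh₁ : AbsolutelyContinuousOnInterval h 0 (1/2) :=
    hh.mono (uIcc_subset_uIcc (by simp) (by simp [uIcc_of_le]; norm_num))
  have hh₂ : AbsolutelyContinuousOnInterval h (1/2) 1 :=
    hh.mono (uIcc_subset_uIcc (by simp [uIcc_of_le]; norm_num) (by simp))
  have hint₁ : IntervalIntegrable (fun t => simpsonKernel t * deriv h t) volume 0 (1/2) :=
    (hh₁.intervalIntegrable_deriv.continuousOn_mul (by fun_prop)).congr_uIoo hleft.symm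
  have hint₂ : IntervalIntegrable (fun t => simpsonKernel t * deriv h t) volume (1/2) 1 :=
    (hh₂.intervalIntegrable_deriv.continuousOn_mul (by fun_prop)).congr_uIoo hright.symm
  rw [← integral_add_adjacent_intervals hint₁ hint₂, integral_congr_uIoo hleft,
    integral_congr_uIoo hright, hh₁.integral_sub_const_mul_deriv,
    hh₂.integral_sub_const_mul_deriv, ← integral_add_adjacent_intervals
      hh₁.continuousOn.intervalIntegrable hh₂.continuousOn.intervalIntegrable]
  ring

theorem add_mul_mem_uIcc {a c t : ℝ} (ht : t ∈ Icc (0:ℝ) 1) : a + t * c ∈ uIcc a (a + c) := by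
  rcases le_total 0 c with hc | hc
  · rw [uIcc_of_le (by linarith)]
    constructor <;> nlinarith [ht.1, ht.2]
  · rw [uIcc_of_ge (by linarith)]
    constructor <;> nlinarith [ht.1, ht.2]

theorem comp_add_mul_eq_add_integral {f f' : ℝ → ℝ} {a c : ℝ}
    (hFTC : ∀ x ∈ uIcc a (a + c), f x = f a + ∫ s in a..x, f' s) {t : ℝ} (ht : t ∈ Icc (0:ℝ) 1) :
    f (a + t * c) = f a + c * ∫ s in (0:ℝ)..t, f' (a + s * c) := by
  have hcov := smul_integral_comp_mul_add (a := 0) (b := t) f' c a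
  simp only [mul_zero, zero_add, smul_eq_mul] at hcov
  rw [hFTC _ (add_mul_mem_uIcc ht)]
  simp_rw [add_comm a, mul_comm _ c, hcov]

theorem stmt0_general (η : ℝ → ℝ → ℝ) (f f' : ℝ → ℝ) (a b : ℝ)
    (hη : η b a ≠ 0)
    (hFTC : ∀ x ∈ Set.uIcc a (a + η b a), f x = f a + ∫ t in a..x, f' t)
    (hint' : IntervalIntegrable (fun t => f' (a + t * η b a)) MeasureTheory.volume 0 1)
    (m : ℝ → ℝ)
    (hm : ∀ t : ℝ, m t = if t < 1/2 then t - 1/6 else t - 5/6) :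
    (1/6 : ℝ) * (f a + 4 * f (a + η b a / 2) + f (a + η b a)) -
      (1 / η b a) * (∫ x in a..(a + η b a), f x) =
    η b a * ∫ t in (0:ℝ)..1, m t * f' (a + t * η b a) := by
  set c := η b a
  set G : ℝ → ℝ := fun t => f a + c * ∫ s in (0:ℝ)..t, f' (a + s * c)
  have hfG : ∀ t ∈ Icc (0:ℝ) 1, f (a + t * c) = G t := fun t ht =>
    comp_add_mul_eq_add_integral hFTC ht
  have hGac : AbsolutelyContinuousOnInterval G 0 1 :=
    contDiffOn_const.absolutelyContinuousOnInterval.fun_add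
      ((hint'.absolutelyContinuousOnInterval_intervalIntegral (by simp)).const_mul c)
  have hGderiv : ∀ᵐ t, t ∈ uIoc (0:ℝ) 1 →
      simpsonKernel t * deriv G t = c * (m t * f' (a + t * c)) := by
    filter_upwards [hint'.ae_hasDerivAt_integral] with t hderiv ht
    rw [(((hderiv (uIoc_subset_uIcc ht) 0 (by simp)).const_mul c).const_add (f a)).deriv, hm,
      simpsonKernel]
    ring
  have hintegral : ∫ x in a..(a + c), f x = c * ∫ t in (0:ℝ)..1, G t := by
    have hcov := smul_integral_comp_mul_add (a := 0) (b := 1) f c a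
    simp only [mul_zero, zero_add, mul_one, smul_eq_mul] at hcov
    rw [add_comm a, ← hcov]
    congr 1
    refine integral_congr fun t ht => ?_
    rw [uIcc_of_le zero_le_one] at ht
    simp only [← hfG t ht, add_comm a, mul_comm c]
  have h0 : f a = G 0 := by simpa using hfG 0 (by simp)
  have hhalf : f (a + c / 2) = G (1/2) := by
    simpa [div_eq_inv_mul] using hfG (1/2) (by norm_num)
  have h1 : f (a + c) = G 1 := by simpa using hfG 1 (by simp)
  have hkernel : c * ∫ t in (0:ℝ)..1, m t * f' (a + t * c) =
      (G 0 + 4 * G (1/2) + G 1) / 6 - ∫ t in (0:ℝ)..1, G t := by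
    rw [← intervalIntegral.integral_const_mul, ← integral_congr_ae hGderiv,
      hGac.integral_simpsonKernel_mul_deriv]
  rw [hkernel, h0, hhalf, h1, hintegral]
  field_simp

theorem stmt0 (I : Set ℝ) (η : ℝ → ℝ → ℝ) (f f' : ℝ → ℝ) (a b : ℝ)
    (hI : IsOpen I)
    (hinv : ∀ u ∈ I, ∀ v ∈ I, ∀ t ∈ Set.Icc (0:ℝ) 1, u + t * η v u ∈ I)
    (hηnn : ∀ u ∈ I, ∀ v ∈ I, 0 ≤ η v u)
    (ha : a ∈ I) (hb : b ∈ I) (hη : η b a ≠ 0)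
    (hint : IntervalIntegrable f' MeasureTheory.volume a (a + η b a))
    (hFTC : ∀ x ∈ Set.uIcc a (a + η b a), f x = f a + ∫ t in a..x, f' t)
    (hint' : IntervalIntegrable (fun t => f' (a + t * η b a)) MeasureTheory.volume 0 1)
    (m : ℝ → ℝ)
    (hm : ∀ t : ℝ, m t = if t < 1/2 then t - 1/6 else t - 5/6) :
    (1/6 : ℝ) * (f a + 4 * f (a + η b a / 2) + f (a + η b a)) -
      (1 / η b a) * (∫ x in a..(a + η b a), f x) =
    η b a * ∫ t in (0:ℝ)..1, m t * f' (a + t * η b a) :=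
  stmt0_general η f f' a b hη hFTC hint' m hm
end

section
/- Let I ⊆ ℝ be an open invex set with respect to η : I × I → ℝ₊, and let f : I → ℝ be differentiable with a, b ∈ I and η(b,a) ≠ 0. If |f'| is preinvex on I (i.e., |f'(u + t·η(v,u))| ≤ (1−t)|f'(u)| + t|f'(v)| for all u, v ∈ I, t ∈ [0,1]), then |(1/6)[f(a) + 4f(a + η(b,a)/2) + f(a + η(b,a))] − (1/η(b,a)) ∫_a^{a+η(b,a)} f(x) dx| ≤ (5/72)·η(b,a)·(|f'(a)| + |f'(b)|). -/
/-!
Put `h = η(b, a) > 0` and `g t = f (a + t h)` on `[0, 1]`. Integrating by parts against the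
Simpson kernel `t - 1/6` on `[0, 1/2]` and `t - 5/6` on `[1/2, 1]` writes the Simpson error
`(1/6)(g 0 + 4 g (1/2) + g 1) - ∫₀¹ g` as `∫ kernel · g'`. Preinvexity of `|f'|` along the segment
gives `|g' t| ≤ h ((1 - t)|f' a| + t |f' b|)`, and integrating `|kernel|` against this affine
majorant gives `(61 + 29)/1296 = 5/72` times `h (|f' a| + |f' b|)`.
-/

open Real MeasureTheory intervalIntegral Set

lemma integral_sub_mul_affine (c p q u v : ℝ) :
    ∫ t in u..v, (t - c) * (p + q * t) =
      ((p + q * c) * (v - c) ^ 2 / 2 + q * (v - c) ^ 3 / 3) -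
        ((p + q * c) * (u - c) ^ 2 / 2 + q * (u - c) ^ 3 / 3) := by
  refine integral_eq_sub_of_hasDerivAt
    (f := fun t => (p + q * c) * (t - c) ^ 2 / 2 + q * (t - c) ^ 3 / 3) (fun t _ => ?_) ?_
  swap
  · apply Continuous.intervalIntegrable; fun_prop
  have := ((((hasDerivAt_id t).sub_const c).pow 2).const_mul (p + q * c)).div_const 2 |>.add
    (((((hasDerivAt_id t).sub_const c).pow 3).const_mul q).div_const 3)
  refine this.congr_deriv ?_
  simp only [id_eq]
  ring

lemma integral_abs_sub_mul_affine {c u v : ℝ} (p q : ℝ) (huc : u ≤ c) (hcv : c ≤ v) :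
    ∫ t in u..v, |t - c| * (p + q * t) =
      (p + q * c) * ((c - u) ^ 2 + (v - c) ^ 2) / 2 + q * ((v - c) ^ 3 - (c - u) ^ 3) / 3 := by
  have hleft : ∫ t in u..c, |t - c| * (p + q * t) = -∫ t in u..c, (t - c) * (p + q * t) := by
    rw [← intervalIntegral.integral_neg]
    refine integral_congr fun t ht => ?_
    rw [uIcc_of_le huc] at ht
    simp only [abs_of_nonpos (sub_nonpos.2 ht.2), neg_mul]
  have hright : ∫ t in c..v, |t - c| * (p + q * t) = ∫ t in c..v, (t - c) * (p + q * t) := by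
    refine integral_congr fun t ht => ?_
    rw [uIcc_of_le hcv] at ht
    simp only [abs_of_nonneg (sub_nonneg.2 ht.1)]
  rw [← integral_add_adjacent_intervals (by apply Continuous.intervalIntegrable; fun_prop)
      (by apply Continuous.intervalIntegrable; fun_prop), hleft, hright,
    integral_sub_mul_affine, integral_sub_mul_affine]
  ring

lemma integral_sub_mul_deriv {g g' : ℝ → ℝ} {u v : ℝ} (c : ℝ)
    (hg : ∀ t ∈ uIcc u v, HasDerivAt g (g' t) t) (hg' : IntervalIntegrable g' volume u v) :
    ∫ t in u..v, (t - c) * g' t = (v - c) * g v - (u - c) * g u - ∫ t in u..v, g t := by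
  simpa using integral_mul_deriv_eq_deriv_mul (u := fun t => t - c) (u' := fun _ => 1)
    (fun t _ => (hasDerivAt_id t).sub_const c) hg (by simp) hg'

section Simpson

variable {g g' : ℝ → ℝ}

lemma simpson_sub_integral_eq (hg : ∀ t ∈ Icc (0 : ℝ) 1, HasDerivAt g (g' t) t)
    (hg' : IntervalIntegrable g' volume 0 1) :
    (1 / 6 : ℝ) * (g 0 + 4 * g (1 / 2) + g 1) - ∫ t in (0 : ℝ)..1, g t =
      (∫ t in (0 : ℝ)..1 / 2, (t - 1 / 6) * g' t) + ∫ t in (1 / 2 : ℝ)..1, (t - 5 / 6) * g' t := by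
  have hsub : ∀ {u v : ℝ}, 0 ≤ u → u ≤ v → v ≤ 1 → uIcc u v ⊆ Icc 0 1 := fun hu huv hv => by
    rw [uIcc_of_le huv]; exact Icc_subset_Icc hu hv
  have hg_int : ∀ {u v : ℝ}, 0 ≤ u → u ≤ v → v ≤ 1 → IntervalIntegrable g volume u v :=
    fun hu huv hv => ContinuousOn.intervalIntegrable fun t ht =>
      (hg t (hsub hu huv hv ht)).continuousAt.continuousWithinAt
  have hg'_int : ∀ {u v : ℝ}, 0 ≤ u → u ≤ v → v ≤ 1 → IntervalIntegrable g' volume u v :=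
    fun hu huv hv => hg'.mono_set (uIcc_of_le (zero_le_one' ℝ) ▸ hsub hu huv hv)
  rw [integral_sub_mul_deriv _ (fun t ht => hg t (hsub le_rfl (by norm_num) (by norm_num) ht))
      (hg'_int le_rfl (by norm_num) (by norm_num)),
    integral_sub_mul_deriv _ (fun t ht => hg t (hsub (by norm_num) (by norm_num) le_rfl ht))
      (hg'_int (by norm_num) (by norm_num) le_rfl),
    ← integral_add_adjacent_intervals (hg_int le_rfl (by norm_num : (0 : ℝ) ≤ 1 / 2) (by norm_num))
      (hg_int (by norm_num) (by norm_num) le_rfl)]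
  ring

lemma abs_integral_sub_mul_le {u v : ℝ} (c p q : ℝ) (huv : u ≤ v)
    (hbound : ∀ t ∈ Icc u v, |g' t| ≤ p + q * t) :
    |∫ t in u..v, (t - c) * g' t| ≤ ∫ t in u..v, |t - c| * (p + q * t) := by
  rw [← Real.norm_eq_abs]
  refine norm_integral_le_of_norm_le huv (ae_of_all _ fun t ht => ?_) ?_
  swap
  · apply Continuous.intervalIntegrable; fun_prop
  rw [Real.norm_eq_abs, abs_mul]
  exact mul_le_mul_of_nonneg_left (hbound t (Ioc_subset_Icc_self ht)) (abs_nonneg _)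

lemma abs_simpson_sub_integral_le (hg : ∀ t ∈ Icc (0 : ℝ) 1, HasDerivAt g (g' t) t)
    (hg' : IntervalIntegrable g' volume 0 1) {A B : ℝ}
    (hbound : ∀ t ∈ Icc (0 : ℝ) 1, |g' t| ≤ (1 - t) * A + t * B) :
    |(1 / 6 : ℝ) * (g 0 + 4 * g (1 / 2) + g 1) - ∫ t in (0 : ℝ)..1, g t| ≤
      5 / 72 * (A + B) := by
  have haffine : ∀ {u v : ℝ}, 0 ≤ u → v ≤ 1 → ∀ t ∈ Icc u v, |g' t| ≤ A + (B - A) * t :=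
    fun hu hv t ht => (hbound t ⟨hu.trans ht.1, ht.2.trans hv⟩).trans_eq (by ring)
  rw [simpson_sub_integral_eq hg hg']
  calc _ ≤ |∫ t in (0 : ℝ)..1 / 2, (t - 1 / 6) * g' t| +
          |∫ t in (1 / 2 : ℝ)..1, (t - 5 / 6) * g' t| := abs_add_le _ _
    _ ≤ (∫ t in (0 : ℝ)..1 / 2, |t - 1 / 6| * (A + (B - A) * t)) +
          ∫ t in (1 / 2 : ℝ)..1, |t - 5 / 6| * (A + (B - A) * t) :=
        add_le_add (abs_integral_sub_mul_le _ _ _ (by norm_num) (haffine le_rfl (by norm_num)))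
          (abs_integral_sub_mul_le _ _ _ (by norm_num) (haffine (by norm_num) le_rfl))
    _ = 5 / 72 * (A + B) := by
        rw [integral_abs_sub_mul_affine _ _ (by norm_num) (by norm_num),
          integral_abs_sub_mul_affine _ _ (by norm_num) (by norm_num)]
        ring

end Simpson

theorem stmt1 (I : Set ℝ) (η : ℝ → ℝ → ℝ) (f : ℝ → ℝ) (a b : ℝ)
    (hI : IsOpen I)
    (hinv : ∀ u ∈ I, ∀ v ∈ I, ∀ t ∈ Set.Icc (0:ℝ) 1, u + t * η v u ∈ I)
    (hηnn : ∀ u ∈ I, ∀ v ∈ I, 0 ≤ η v u)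
    (ha : a ∈ I) (hb : b ∈ I) (hη : η b a ≠ 0)
    (hf : DifferentiableOn ℝ f I)
    (hpre : ∀ u ∈ I, ∀ v ∈ I, ∀ t ∈ Set.Icc (0:ℝ) 1,
      |deriv f (u + t * η v u)| ≤ (1 - t) * |deriv f u| + t * |deriv f v|) :
    |(1/6 : ℝ) * (f a + 4 * f (a + η b a / 2) + f (a + η b a)) -
      (1 / η b a) * ∫ x in a..(a + η b a), f x| ≤ (5/72) * η b a * (|deriv f a| + |deriv f b|) := by
  set h := η b a
  have hpos : 0 < h := (hηnn a ha b hb).lt_of_ne' hη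
  have hderiv : ∀ t ∈ Icc (0 : ℝ) 1,
      HasDerivAt (fun t => f (a + t * h)) (deriv f (a + t * h) * h) t := fun t ht =>
    ((hf.differentiableAt (hI.mem_nhds (hinv a ha b hb t ht))).hasDerivAt).comp t
      ((hasDerivAt_mul_const h).const_add a)
  have hbound : ∀ t ∈ Icc (0 : ℝ) 1,
      |deriv f (a + t * h) * h| ≤ (1 - t) * (h * |deriv f a|) + t * (h * |deriv f b|) :=
    fun t ht => by
      rw [abs_mul, abs_of_pos hpos]
      exact (mul_le_mul_of_nonneg_right (hpre a ha b hb t ht) hpos.le).trans_eq (by ring)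
  have hint : IntervalIntegrable (fun t => deriv f (a + t * h) * h) volume 0 1 := by
    refine IntervalIntegrable.mono_fun (f := fun t => (1 - t) * (h * |deriv f a|) +
      t * (h * |deriv f b|)) (by apply Continuous.intervalIntegrable; fun_prop)
      (((measurable_deriv f).comp (by fun_prop)).mul_const h).aestronglyMeasurable ?_
    rw [uIoc_of_le zero_le_one]
    filter_upwards [ae_restrict_mem measurableSet_Ioc] with t ht
    exact (hbound t (Ioc_subset_Icc_self ht)).trans (le_abs_self _)
  have hchange : ∫ t in (0 : ℝ)..1, f (a + t * h) = 1 / h * ∫ x in a..(a + h), f x := by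
    simp_rw [mul_comm _ h]
    simp [integral_comp_add_mul f hη a]
  have := abs_simpson_sub_integral_le hderiv hint hbound
  rw [hchange] at this
  refine Eq.trans_le ?_ (this.trans_eq (by ring))
  ring_nf
end

section
/- Let I ⊆ ℝ be an open invex set with respect to η : I × I → ℝ₊, let f : I → ℝ be differentiable, a, b ∈ I with η(b,a) ≠ 0. If |f'| is prequasiinvex on I, then |(1/6)[f(a) + 4f(a + η(b,a)/2) + f(a + η(b,a))] − (1/η(b,a)) ∫_a^{a+η(b,a)} f(x) dx| ≤ (5/36)·η(b,a)·max{|f'(a)|, |f'(b)|}. -/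
/-! Integrating by parts against the Peano kernel of Simpson's rule, which is `x - (5a + b)/6`
on the left half of `[a, b]` and `x - (a + 5b)/6` on the right half, writes the Simpson error
as `∫ K f'`. Bounding `|f'|` by `M` leaves `M ∫ |K| = 5 (b - a)² M / 36`. Invexity puts the
segment `[a, a + η(b, a)]` inside `I`, and prequasiinvexity bounds `|f'|` on it by
`max {|f'(a)|, |f'(b)|}`. -/

open Real MeasureTheory intervalIntegral Set

theorem integral_abs_sub_of_le {p q r : ℝ} (hpq : p ≤ q) (hqr : q ≤ r) :
    ∫ x in p..r, |x - q| = ((q - p) ^ 2 + (r - q) ^ 2) / 2 := by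
  have hcont : Continuous fun x : ℝ => |x - q| := by fun_prop
  have hleft : ∫ x in p..q, |x - q| = (q - p) ^ 2 / 2 := by
    rw [integral_congr (g := fun x => q - x) fun x hx => by
      rw [uIcc_of_le hpq] at hx
      rw [abs_of_nonpos (by linarith [hx.2]), neg_sub]]
    simp only [integral_sub intervalIntegrable_const intervalIntegrable_id,
      intervalIntegral.integral_const, integral_id, smul_eq_mul]
    ring
  have hright : ∫ x in q..r, |x - q| = (r - q) ^ 2 / 2 := by
    rw [integral_congr (g := fun x => x - q) fun x hx => by
      rw [uIcc_of_le hqr] at hx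
      rw [abs_of_nonneg (by linarith [hx.1])]]
    simp only [integral_sub intervalIntegrable_id intervalIntegrable_const,
      intervalIntegral.integral_const, integral_id, smul_eq_mul]
    ring
  rw [← integral_add_adjacent_intervals (hcont.intervalIntegrable p q)
    (hcont.intervalIntegrable q r), hleft, hright]
  ring

theorem abs_integral_sub_mul_le_s6 {g : ℝ → ℝ} {p c r M : ℝ} (hpc : p ≤ c) (hcr : c ≤ r)
    (hg : ∀ x ∈ Icc p r, |g x| ≤ M) :
    |∫ x in p..r, (x - c) * g x| ≤ M * (((c - p) ^ 2 + (r - c) ^ 2) / 2) := by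
  have hbound : ∀ x ∈ Ioc p r, ‖(x - c) * g x‖ ≤ |x - c| * M := fun x hx => by
    rw [norm_eq_abs, abs_mul]
    exact mul_le_mul_of_nonneg_left (hg x (Ioc_subset_Icc_self hx)) (abs_nonneg _)
  calc |∫ x in p..r, (x - c) * g x|
      ≤ ∫ x in p..r, |x - c| * M :=
        norm_integral_le_of_norm_le (hpc.trans hcr) (.of_forall hbound)
          (Continuous.intervalIntegrable (by fun_prop) _ _)
    _ = M * (((c - p) ^ 2 + (r - c) ^ 2) / 2) := by
        rw [intervalIntegral.integral_mul_const, integral_abs_sub_of_le hpc hcr, mul_comm]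

theorem integral_sub_mul_deriv_eq {f f' : ℝ → ℝ} {p r : ℝ} (c : ℝ)
    (hf : ∀ x ∈ uIcc p r, HasDerivAt f (f' x) x) (hf' : IntervalIntegrable f' volume p r) :
    ∫ x in p..r, (x - c) * f' x = (r - c) * f r - (p - c) * f p - ∫ x in p..r, f x := by
  simpa using integral_mul_deriv_eq_deriv_mul (u := fun x => x - c) (u' := fun _ => 1)
    (fun x _ => (hasDerivAt_id x).sub_const c) hf intervalIntegrable_const hf'

theorem intervalIntegrable_deriv_of_abs_le {f : ℝ → ℝ} {a b M : ℝ} (hab : a ≤ b)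
    (hM : ∀ x ∈ Icc a b, |deriv f x| ≤ M) : IntervalIntegrable (deriv f) volume a b := by
  rw [intervalIntegrable_iff_integrableOn_Icc_of_le hab]
  refine Integrable.mono' (g := fun _ => M) (integrableOn_const measure_Icc_lt_top.ne)
    (measurable_deriv f).aestronglyMeasurable.restrict ?_
  filter_upwards [ae_restrict_mem measurableSet_Icc] with x hx
  exact hM x hx

theorem simpson_sub_average_eq_integral_kernel {f : ℝ → ℝ} {a b : ℝ} (hab : a < b)
    (hf : ∀ x ∈ Icc a b, DifferentiableAt ℝ f x)
    (hf' : IntervalIntegrable (deriv f) volume a b) :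
    (1 / 6 : ℝ) * (f a + 4 * f ((a + b) / 2) + f b) - (1 / (b - a)) * ∫ x in a..b, f x
      = (1 / (b - a)) * ((∫ x in a..(a + b) / 2, (x - (5 * a + b) / 6) * deriv f x)
          + ∫ x in (a + b) / 2..b, (x - (a + 5 * b) / 6) * deriv f x) := by
  set m := (a + b) / 2 with hm
  have ham : a ≤ m := by linarith
  have hmb : m ≤ b := by linarith
  have hleft : Icc a m ⊆ Icc a b := Icc_subset_Icc le_rfl hmb
  have hright : Icc m b ⊆ Icc a b := Icc_subset_Icc ham le_rfl
  have hderiv : ∀ x ∈ Icc a b, HasDerivAt f (deriv f x) x := fun x hx => (hf x hx).hasDerivAt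
  have hcont : ContinuousOn f (Icc a b) := fun x hx => (hf x hx).continuousAt.continuousWithinAt
  have hba : b - a ≠ 0 := sub_ne_zero.2 hab.ne'
  rw [integral_sub_mul_deriv_eq _ (fun x hx => hderiv x (hleft (by rwa [uIcc_of_le ham] at hx)))
      (hf'.mono_set (by rw [uIcc_of_le ham, uIcc_of_le hab.le]; exact hleft)),
    integral_sub_mul_deriv_eq _ (fun x hx => hderiv x (hright (by rwa [uIcc_of_le hmb] at hx)))
      (hf'.mono_set (by rw [uIcc_of_le hmb, uIcc_of_le hab.le]; exact hright)),
    ← integral_add_adjacent_intervals ((hcont.mono hleft).intervalIntegrable_of_Icc ham)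
      ((hcont.mono hright).intervalIntegrable_of_Icc hmb)]
  field_simp
  ring

theorem abs_simpson_sub_average_le {f : ℝ → ℝ} {a b M : ℝ} (hab : a < b)
    (hf : ∀ x ∈ Icc a b, DifferentiableAt ℝ f x) (hM : ∀ x ∈ Icc a b, |deriv f x| ≤ M) :
    |(1 / 6 : ℝ) * (f a + 4 * f ((a + b) / 2) + f b) - (1 / (b - a)) * ∫ x in a..b, f x|
      ≤ 5 / 36 * (b - a) * M := by
  have hleft : |∫ x in a..(a + b) / 2, (x - (5 * a + b) / 6) * deriv f x|
      ≤ M * (5 * (b - a) ^ 2 / 72) :=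
    (abs_integral_sub_mul_le_s6 (by linarith) (by linarith)
      fun x hx => hM x (Icc_subset_Icc le_rfl (by linarith) hx)).trans_eq (by ring)
  have hright : |∫ x in (a + b) / 2..b, (x - (a + 5 * b) / 6) * deriv f x|
      ≤ M * (5 * (b - a) ^ 2 / 72) :=
    (abs_integral_sub_mul_le_s6 (by linarith) (by linarith)
      fun x hx => hM x (Icc_subset_Icc (by linarith) le_rfl hx)).trans_eq (by ring)
  have hba : 0 < b - a := sub_pos.2 hab
  rw [simpson_sub_average_eq_integral_kernel hab hf
      (intervalIntegrable_deriv_of_abs_le hab.le hM), abs_mul, abs_of_pos (one_div_pos.2 hba)]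
  calc _ ≤ 1 / (b - a) * (M * (5 * (b - a) ^ 2 / 72) + M * (5 * (b - a) ^ 2 / 72)) := by
        gcongr
        exact (abs_add_le _ _).trans (add_le_add hleft hright)
    _ = 5 / 36 * (b - a) * M := by
        field_simp
        ring

theorem forall_mem_Icc_add_of_forall_add_mul {P : ℝ → Prop} {a h : ℝ} (hh : 0 < h)
    (hP : ∀ t ∈ Icc (0 : ℝ) 1, P (a + t * h)) : ∀ x ∈ Icc a (a + h), P x := by
  intro x hx
  have ht : (x - a) / h ∈ Icc (0 : ℝ) 1 :=
    ⟨div_nonneg (by linarith [hx.1]) hh.le, (div_le_one hh).2 (by linarith [hx.2])⟩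
  simpa [div_mul_cancel₀ _ hh.ne'] using hP _ ht

theorem stmt6 (I : Set ℝ) (η : ℝ → ℝ → ℝ) (f : ℝ → ℝ) (a b : ℝ)
    (hI : IsOpen I)
    (hinv : ∀ u ∈ I, ∀ v ∈ I, ∀ t ∈ Set.Icc (0:ℝ) 1, u + t * η v u ∈ I)
    (hηnn : ∀ u ∈ I, ∀ v ∈ I, 0 ≤ η v u)
    (ha : a ∈ I) (hb : b ∈ I) (hη : η b a ≠ 0)
    (hf : DifferentiableOn ℝ f I)
    (hpre : ∀ u ∈ I, ∀ v ∈ I, ∀ t ∈ Set.Icc (0:ℝ) 1,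
      |deriv f (u + t * η v u)| ≤ max (|deriv f u|) (|deriv f v|)) :
    |(1/6 : ℝ) * (f a + 4 * f (a + η b a / 2) + f (a + η b a)) -
      (1 / η b a) * ∫ x in a..(a + η b a), f x| ≤ (5/36) * η b a * max (|deriv f a|) (|deriv f b|) := by
  have hpos : 0 < η b a := (hηnn a ha b hb).lt_of_ne' hη
  have hdiff : ∀ x ∈ Icc a (a + η b a), DifferentiableAt ℝ f x :=
    forall_mem_Icc_add_of_forall_add_mul hpos fun t ht =>
      hf.differentiableAt (hI.mem_nhds (hinv a ha b hb t ht))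
  have hbound : ∀ x ∈ Icc a (a + η b a), |deriv f x| ≤ max (|deriv f a|) (|deriv f b|) :=
    forall_mem_Icc_add_of_forall_add_mul hpos (hpre a ha b hb)
  have hmid : (a + (a + η b a)) / 2 = a + η b a / 2 := by ring
  simpa only [hmid, add_sub_cancel_left] using
    abs_simpson_sub_average_le (lt_add_of_pos_right a hpos) hdiff hbound
end

section
/- Let I ⊆ ℝ be an open invex set with respect to η : I × I → ℝ₊, let f : I → ℝ be differentiable, a, b ∈ I with η(b,a) ≠ 0, and suppose |f'| is prequasiinvex on I. If additionally f(a) = f(a + η(b,a)/2) = f(a + η(b,a)), then |f(a + η(b,a)/2) − (1/η(b,a)) ∫_a^{a+η(b,a)} f(x) dx| ≤ (5/36)·η(b,a)·max{|f'(a)|, |f'(b)|}. -/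
/-! Since `f` takes the same value at both ends of each half `[s, t]` of `[a, a + η(b,a)]`,
integration by parts against the kernel `x - (s + t)/2` gives
`(t - s) f(s) - ∫ₛᵗ f = ∫ₛᵗ (x - (s + t)/2) f'(x) dx`, which is at most `M (t - s)² / 4` in
absolute value when `|f'| ≤ M`. Prequasiinvexity bounds `|f'|` on the whole segment by
`M = max |f'(a)| |f'(b)|`, so the two halves give `M η² / 8 ≤ 5 M η² / 36`. -/

open Real MeasureTheory intervalIntegral Set

lemma forall_mem_Icc_of_forall_mem_unitInterval {P : ℝ → Prop} {a h : ℝ} (hh : 0 ≤ h)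
    (hP : ∀ t ∈ Icc (0 : ℝ) 1, P (a + t * h)) : ∀ x ∈ Icc a (a + h), P x := by
  rw [← segment_eq_Icc (by linarith), segment_eq_image']
  rintro _ ⟨t, ht, rfl⟩
  simpa using hP t ht

lemma integral_abs_sub_midpoint {s t : ℝ} (hst : s ≤ t) :
    ∫ x in s..t, |x - (s + t) / 2| = (t - s) ^ 2 / 4 := by
  set c := (s + t) / 2 with hc
  have hsc : s ≤ c := by linarith
  have hct : c ≤ t := by linarith
  have hcont : Continuous fun x : ℝ ↦ |x - c| := by fun_prop
  have hleft : ∫ x in s..c, |x - c| = ∫ x in s..c, (c - x) :=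
    integral_congr fun x hx ↦ by
      rw [uIcc_of_le hsc] at hx
      simp only [abs_of_nonpos (sub_nonpos.2 hx.2), neg_sub]
  have hright : ∫ x in c..t, |x - c| = ∫ x in c..t, (x - c) :=
    integral_congr fun x hx ↦ by
      rw [uIcc_of_le hct] at hx
      simp only [abs_of_nonneg (sub_nonneg.2 hx.1)]
  rw [← integral_add_adjacent_intervals (hcont.intervalIntegrable s c)
    (hcont.intervalIntegrable c t), hleft, hright]
  simp only [intervalIntegral.integral_sub intervalIntegrable_const intervalIntegrable_id,
    intervalIntegral.integral_sub intervalIntegrable_id intervalIntegrable_const,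
    intervalIntegral.integral_const, integral_id, smul_eq_mul]
  ring

lemma integral_sub_mul_deriv_s7 {f : ℝ → ℝ} {s t : ℝ} (c : ℝ)
    (hf : ∀ x ∈ uIcc s t, DifferentiableAt ℝ f x)
    (hf' : IntervalIntegrable (deriv f) volume s t) :
    ∫ x in s..t, (x - c) * deriv f x = (t - c) * f t - (s - c) * f s - ∫ x in s..t, f x := by
  simpa using integral_mul_deriv_eq_deriv_mul (fun x _ ↦ (hasDerivAt_id x).sub_const c)
    (fun x hx ↦ (hf x hx).hasDerivAt) intervalIntegrable_const hf'

lemma abs_mul_sub_integral_le_of_eq {f : ℝ → ℝ} {s t M : ℝ} (hst : s ≤ t)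
    (hf : ∀ x ∈ Icc s t, DifferentiableAt ℝ f x) (hM : ∀ x ∈ Icc s t, |deriv f x| ≤ M)
    (heq : f s = f t) :
    |(t - s) * f s - ∫ x in s..t, f x| ≤ M * (t - s) ^ 2 / 4 := by
  have hf' : IntervalIntegrable (deriv f) volume s t :=
    (intervalIntegrable_iff_integrableOn_Icc_of_le hst).2 <|
      .of_bound measure_Icc_lt_top (measurable_deriv f).aestronglyMeasurable M
        ((ae_restrict_iff' measurableSet_Icc).2 (ae_of_all _ hM))
  have hkernel := integral_sub_mul_deriv_s7 ((s + t) / 2) (uIcc_of_le hst ▸ hf) hf'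
  rw [← heq] at hkernel
  calc |(t - s) * f s - ∫ x in s..t, f x|
      = ‖∫ x in s..t, (x - (s + t) / 2) * deriv f x‖ := by rw [hkernel, norm_eq_abs]; ring_nf
    _ ≤ ∫ x in s..t, |x - (s + t) / 2| * M :=
        norm_integral_le_of_norm_le hst (ae_of_all _ fun x hx ↦ by
          rw [norm_mul, norm_eq_abs]
          exact mul_le_mul_of_nonneg_left (hM x (Ioc_subset_Icc_self hx)) (abs_nonneg _))
          ((by fun_prop : Continuous fun x ↦ |x - (s + t) / 2| * M).intervalIntegrable s t)
    _ = M * (t - s) ^ 2 / 4 := by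
        rw [intervalIntegral.integral_mul_const, integral_abs_sub_midpoint hst]; ring

lemma abs_mul_sub_integral_le_of_eq_of_eq {f : ℝ → ℝ} {s t M : ℝ} (hst : s ≤ t)
    (hf : ∀ x ∈ Icc s t, DifferentiableAt ℝ f x) (hM : ∀ x ∈ Icc s t, |deriv f x| ≤ M)
    (hs : f s = f ((s + t) / 2)) (ht : f ((s + t) / 2) = f t) :
    |(t - s) * f ((s + t) / 2) - ∫ x in s..t, f x| ≤ M * (t - s) ^ 2 / 8 := by
  set m := (s + t) / 2 with hm
  have hsm : s ≤ m := by linarith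
  have hmt : m ≤ t := by linarith
  have hleft : Icc s m ⊆ Icc s t := Icc_subset_Icc_right hmt
  have hright : Icc m t ⊆ Icc s t := Icc_subset_Icc_left hsm
  have hfc : ContinuousOn f (Icc s t) := fun x hx ↦ (hf x hx).continuousAt.continuousWithinAt
  have hsplit : (∫ x in s..m, f x) + ∫ x in m..t, f x = ∫ x in s..t, f x :=
    integral_add_adjacent_intervals ((hfc.mono hleft).intervalIntegrable_of_Icc hsm)
      ((hfc.mono hright).intervalIntegrable_of_Icc hmt)
  have hbound_left := abs_mul_sub_integral_le_of_eq hsm (fun x hx ↦ hf x (hleft hx))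
    (fun x hx ↦ hM x (hleft hx)) hs
  have hbound_right := abs_mul_sub_integral_le_of_eq hmt (fun x hx ↦ hf x (hright hx))
    (fun x hx ↦ hM x (hright hx)) ht
  calc |(t - s) * f m - ∫ x in s..t, f x|
      = |((m - s) * f s - ∫ x in s..m, f x) + ((t - m) * f m - ∫ x in m..t, f x)| := by
        rw [← hsplit, hs]; ring_nf
    _ ≤ M * (m - s) ^ 2 / 4 + M * (t - m) ^ 2 / 4 :=
        (abs_add_le _ _).trans (add_le_add hbound_left hbound_right)
    _ = M * (t - s) ^ 2 / 8 := by ring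

theorem stmt7 (I : Set ℝ) (η : ℝ → ℝ → ℝ) (f : ℝ → ℝ) (a b : ℝ)
    (hI : IsOpen I)
    (hinv : ∀ u ∈ I, ∀ v ∈ I, ∀ t ∈ Set.Icc (0:ℝ) 1, u + t * η v u ∈ I)
    (hηnn : ∀ u ∈ I, ∀ v ∈ I, 0 ≤ η v u)
    (ha : a ∈ I) (hb : b ∈ I) (hη : η b a ≠ 0)
    (hf : DifferentiableOn ℝ f I)
    (hpre : ∀ u ∈ I, ∀ v ∈ I, ∀ t ∈ Set.Icc (0:ℝ) 1,
      |deriv f (u + t * η v u)| ≤ max (|deriv f u|) (|deriv f v|))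
    (heq1 : f a = f (a + η b a / 2)) (heq2 : f (a + η b a / 2) = f (a + η b a)) :
    |f (a + η b a / 2) - (1 / η b a) * ∫ x in a..(a + η b a), f x| ≤
      (5/36) * η b a * max (|deriv f a|) (|deriv f b|) := by
  set h := η b a
  set M := max (|deriv f a|) (|deriv f b|)
  have hh : 0 < h := (hηnn a ha b hb).lt_of_ne' hη
  have hsub : Icc a (a + h) ⊆ I :=
    forall_mem_Icc_of_forall_mem_unitInterval hh.le (hinv a ha b hb)
  have hM : ∀ x ∈ Icc a (a + h), |deriv f x| ≤ M :=
    forall_mem_Icc_of_forall_mem_unitInterval hh.le (hpre a ha b hb)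
  have hM0 : 0 ≤ M := (abs_nonneg _).trans (le_max_left _ _)
  have hmid : (a + (a + h)) / 2 = a + h / 2 := by ring
  have hbound := abs_mul_sub_integral_le_of_eq_of_eq (by linarith)
    (fun x hx ↦ hf.differentiableAt (hI.mem_nhds (hsub hx))) hM
    (hmid ▸ heq1) (hmid ▸ heq2)
  rw [hmid, add_sub_cancel_left] at hbound
  have hrescale : f (a + h / 2) - 1 / h * ∫ x in a..a + h, f x
      = (h * f (a + h / 2) - ∫ x in a..a + h, f x) / h := by field_simp
  rw [hrescale, abs_div, abs_of_pos hh, div_le_iff₀ hh]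
  calc _ ≤ M * h ^ 2 / 8 := hbound
    _ ≤ 5 / 36 * h * M * h := by linarith [mul_nonneg hM0 (sq_nonneg h)]
end
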